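/- For all integers m ≥ 1, ℓ ∈ ℤ, and every natural number n, one has ∑_{j=0}^{⌊m/2⌋} (−1)^j · C(m−j, j) · A_{n+m−2j}(2, 2m+1, ℓ, −1) = ∑_{j=0}^{⌊(m−1)/2⌋} (−1)^j · C(m−1−j, j) · A_{n+m−1−2j}(2, 2m+1, ℓ, −1). Equivalently, (F_{m+1}(N,−1) − F_m(N,−1))·A_n(2, 2m+1, ℓ, −1) = 0 where N is the shift operator N·A_n = A_{n+1} and F denotes the Fibonacci polynomials. -/
import Mathlib

noncomputable def Cz (a : ℕ) (r : ℤ) : ℝ :=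
  if 0 ≤ r then (a.choose r.toNat : ℝ) else 0

noncomputable def A (k m : ℕ) (l : ℤ) (z : ℝ) (n : ℕ) : ℝ :=
  ∑ᶠ h : ℤ, Cz n (((n : ℤ) + m * h + l).fdiv k) * z ^ h

lemma Cz_support {n : ℕ} {r : ℤ} (h : Cz n r ≠ 0) : 0 ≤ r ∧ r ≤ n := by
  unfold Cz at h
  split at h
  · refine ⟨by assumption, ?_⟩
    by_contra hr
    exact h (by rw [Nat.choose_eq_zero_of_lt (by omega)]; norm_num)
  · exact absurd rfl h

lemma Cz_pascal (n : ℕ) (r : ℤ) : Cz (n + 1) r = Cz n r + Cz n (r - 1) := by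
  unfold Cz
  rcases lt_trichotomy r 0 with h | h | h
  · rw [if_neg (by omega), if_neg (by omega), if_neg (by omega)]; ring
  · subst h; norm_num
  · rw [if_pos (by omega), if_pos (by omega), if_pos (by omega)]
    have h1 : r.toNat = (r - 1).toNat + 1 := by omega
    rw [h1, Nat.choose_succ_succ]
    push_cast
    ring

lemma Cz_symm (n : ℕ) (r : ℤ) : Cz n ((n : ℤ) - r) = Cz n r := by
  unfold Cz
  by_cases h0 : 0 ≤ r
  · by_cases h1 : r ≤ (n : ℤ)
    · rw [if_pos (by omega), if_pos h0]
      have h2 : ((n : ℤ) - r).toNat = n - r.toNat := by omega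
      rw [h2, Nat.choose_symm (by omega)]
    · rw [if_neg (by omega), if_pos h0, Nat.choose_eq_zero_of_lt (by omega)]
      norm_num
  · rw [if_pos (by omega), if_neg h0, Nat.choose_eq_zero_of_lt (by omega)]
    norm_num

lemma A_eq_sum (M : ℕ) (hM : 1 ≤ M) (l : ℤ) (n : ℕ) (B : ℤ)
    (hB : 2 * (n : ℤ) + 1 + |l| ≤ B) :
    A 2 M l (-1) n
      = ∑ h ∈ Finset.Icc (-B) B, Cz n (((n : ℤ) + M * h + l).fdiv 2) * (-1 : ℝ) ^ h := by
  unfold A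
  simp only [Nat.cast_ofNat]
  apply finsum_eq_finset_sum_of_support_subset
  intro h hs
  simp only [Function.mem_support] at hs
  have hcz : Cz n (((n : ℤ) + M * h + l).fdiv 2) ≠ 0 := fun hz => hs (by rw [hz]; ring)
  obtain ⟨h1, h2⟩ := Cz_support hcz
  rw [Int.fdiv_eq_ediv_of_nonneg _ (by norm_num)] at h1 h2
  have hx1 : 0 ≤ (n : ℤ) + M * h + l := by omega
  have hx2 : (n : ℤ) + M * h + l ≤ 2 * n + 1 := by omega
  have habs : |(M : ℤ) * h| ≤ 2 * (n : ℤ) + 1 + |l| := by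
    rw [abs_le]
    constructor
    · have := le_abs_self l; linarith
    · have := neg_abs_le l; linarith
  have hMh : |h| ≤ |(M : ℤ) * h| := by
    rw [abs_mul]
    have : (1 : ℤ) ≤ |(M : ℤ)| := by
      rw [abs_of_nonneg (by positivity)]; exact_mod_cast hM
    nlinarith [abs_nonneg h]
  simp only [Finset.coe_Icc, Set.mem_Icc]
  rw [abs_le] at hMh
  constructor <;> [linarith [habs, (abs_le.mp habs).1]; linarith [(abs_le.mp habs).2]]

lemma fdiv_sub_two (x : ℤ) : (x - 2).fdiv 2 = x.fdiv 2 - 1 := by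
  rw [Int.fdiv_eq_ediv_of_nonneg _ (by norm_num), Int.fdiv_eq_ediv_of_nonneg _ (by norm_num)]
  omega

lemma A_pascal (M : ℕ) (hM : 1 ≤ M) (l : ℤ) (n : ℕ) :
    A 2 M l (-1) (n + 1) = A 2 M (l + 1) (-1) n + A 2 M (l - 1) (-1) n := by
  set B : ℤ := 2 * (n : ℤ) + 4 + |l| with hB
  have hb1 : 2 * ((n + 1 : ℕ) : ℤ) + 1 + |l| ≤ B := by push_cast; omega
  have hb2 : 2 * (n : ℤ) + 1 + |l + 1| ≤ B := by
    have := abs_add_le l 1; simp at this; omega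
  have hb3 : 2 * (n : ℤ) + 1 + |l - 1| ≤ B := by
    have := abs_sub l 1; simp [abs_sub_le_iff] at this ⊢
    have h1 : |l - 1| ≤ |l| + 1 := by
      calc |l - 1| ≤ |l| + |(-1 : ℤ)| := abs_sub l 1
        _ = |l| + 1 := by norm_num
    omega
  rw [A_eq_sum M hM l (n + 1) B hb1, A_eq_sum M hM (l + 1) n B hb2,
    A_eq_sum M hM (l - 1) n B hb3, ← Finset.sum_add_distrib]
  apply Finset.sum_congr rfl
  intro h _
  have e1 : ((n + 1 : ℕ) : ℤ) + M * h + l = (n : ℤ) + M * h + (l + 1) := by push_cast; ring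
  have e2 : (n : ℤ) + M * h + (l - 1) = ((n : ℤ) + M * h + (l + 1)) - 2 := by ring
  rw [e1, e2, fdiv_sub_two, Cz_pascal]
  ring

lemma neg_one_zpow_neg (h : ℤ) : ((-1 : ℝ)) ^ (-h) = (-1 : ℝ) ^ h := by
  rw [zpow_neg]
  exact inv_eq_of_mul_eq_one_right (by rw [← mul_zpow]; norm_num)

lemma A_anti (M : ℕ) (l : ℤ) (n : ℕ) :
    A 2 M (l + M) (-1) n = - A 2 M l (-1) n := by
  unfold A
  have key : ∀ h : ℤ, Cz n (((n : ℤ) + M * h + (l + M)).fdiv 2) * (-1 : ℝ) ^ h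
      = -(Cz n (((n : ℤ) + M * (h + 1) + l).fdiv 2) * (-1 : ℝ) ^ (h + 1)) := by
    intro h
    have e1 : (n : ℤ) + M * h + (l + M) = (n : ℤ) + M * (h + 1) + l := by ring
    rw [e1, zpow_add_one₀ (by norm_num : (-1 : ℝ) ≠ 0)]
    ring
  calc (∑ᶠ h : ℤ, Cz n (((n : ℤ) + M * h + (l + M)).fdiv 2) * (-1 : ℝ) ^ h)
      = ∑ᶠ h : ℤ, -(Cz n (((n : ℤ) + M * (h + 1) + l).fdiv 2) * (-1 : ℝ) ^ (h + 1)) :=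
        finsum_congr key
    _ = -∑ᶠ h : ℤ, Cz n (((n : ℤ) + M * (h + 1) + l).fdiv 2) * (-1 : ℝ) ^ (h + 1) :=
        finsum_neg_distrib _
    _ = -∑ᶠ h : ℤ, Cz n (((n : ℤ) + M * h + l).fdiv 2) * (-1 : ℝ) ^ h := by
        have h2 := finsum_comp_equiv (Equiv.addRight (1 : ℤ))
          (f := fun h : ℤ => Cz n (((n : ℤ) + M * h + l).fdiv 2) * (-1 : ℝ) ^ h)
        simp only [Equiv.coe_addRight] at h2
        rw [h2]

lemma fdiv_reflect (n : ℕ) (a : ℤ) :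
    ((n : ℤ) - a + 1).fdiv 2 = (n : ℤ) - ((n : ℤ) + a).fdiv 2 := by
  rw [Int.fdiv_eq_ediv_of_nonneg _ (by norm_num), Int.fdiv_eq_ediv_of_nonneg _ (by norm_num)]
  omega

lemma A_symm (M : ℕ) (l : ℤ) (n : ℕ) :
    A 2 M l (-1) n = A 2 M (1 - l) (-1) n := by
  unfold A
  have key : ∀ h : ℤ, Cz n (((n : ℤ) + M * h + l).fdiv 2) * (-1 : ℝ) ^ h
      = Cz n (((n : ℤ) + M * (-h) + (1 - l)).fdiv 2) * (-1 : ℝ) ^ (-h) := by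
    intro h
    have e1 : (n : ℤ) + M * (-h) + (1 - l) = (n : ℤ) - (M * h + l - 1) := by ring
    have e2 : (n : ℤ) - (M * h + l) + 1 = (n : ℤ) - (M * h + l - 1) := by ring
    rw [e1, ← e2, fdiv_reflect n (M * h + l), neg_one_zpow_neg,
      show (n : ℤ) + (M * h + l) = (n : ℤ) + M * h + l from by ring, Cz_symm]
  calc (∑ᶠ h : ℤ, Cz n (((n : ℤ) + M * h + l).fdiv 2) * (-1 : ℝ) ^ h)
      = ∑ᶠ h : ℤ, Cz n (((n : ℤ) + M * (-h) + (1 - l)).fdiv 2) * (-1 : ℝ) ^ (-h) :=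
        finsum_congr key
    _ = ∑ᶠ h : ℤ, Cz n (((n : ℤ) + M * h + (1 - l)).fdiv 2) * (-1 : ℝ) ^ h := by
        have h2 := finsum_comp_equiv (Equiv.neg ℤ)
          (f := fun h : ℤ => Cz n (((n : ℤ) + M * h + (1 - l)).fdiv 2) * (-1 : ℝ) ^ h)
        simp only [Equiv.neg_apply] at h2
        rw [h2]

noncomputable def LL (M : ℕ) (l : ℤ) (k n : ℕ) : ℝ :=
  ∑ j ∈ Finset.range (k + 1), (-1 : ℝ) ^ j * ((k - j).choose j : ℝ) * A 2 M l (-1) (n + k - 2 * j)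

noncomputable def RR (M : ℕ) (l : ℤ) (k n : ℕ) : ℝ :=
  ∑ i ∈ Finset.range (k + 1), A 2 M (l + (k : ℤ) - 2 * i) (-1) n

lemma RR_rec (M : ℕ) (hM : 1 ≤ M) (l : ℤ) (k n : ℕ) :
    RR M l (k + 2) n = RR M l (k + 1) (n + 1) - RR M l k n := by
  have expand : RR M l (k + 1) (n + 1)
      = ∑ i ∈ Finset.range (k + 2),
          (A 2 M (l + ((k + 2 : ℕ) : ℤ) - 2 * i) (-1) n
            + A 2 M (l + (k : ℤ) - 2 * i) (-1) n) := by
    unfold RR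
    apply Finset.sum_congr rfl
    intro i _
    rw [A_pascal M hM _ n]
    congr 2 <;> push_cast <;> ring
  have h1 : RR M l (k + 2) n
      = (∑ i ∈ Finset.range (k + 2), A 2 M (l + ((k + 2 : ℕ) : ℤ) - 2 * (i : ℤ)) (-1) n)
        + A 2 M (l + ((k + 2 : ℕ) : ℤ) - 2 * ((k + 2 : ℕ) : ℤ)) (-1) n := by
    unfold RR
    exact Finset.sum_range_succ _ _
  have h2 : (∑ i ∈ Finset.range (k + 2), A 2 M (l + (k : ℤ) - 2 * (i : ℤ)) (-1) n)
      = RR M l k n + A 2 M (l + (k : ℤ) - 2 * ((k + 1 : ℕ) : ℤ)) (-1) n := by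
    unfold RR
    exact Finset.sum_range_succ _ _
  rw [expand, Finset.sum_add_distrib, h1, h2]
  have e : l + ((k + 2 : ℕ) : ℤ) - 2 * ((k + 2 : ℕ) : ℤ)
      = l + (k : ℤ) - 2 * ((k + 1 : ℕ) : ℤ) := by push_cast; ring
  rw [e]
  ring

lemma pas (k j : ℕ) (hj : j ≤ k + 1) :
    ((k + 1 - j).choose (j + 1) : ℝ) = ((k - j).choose (j + 1) : ℝ) + ((k - j).choose j : ℝ) := by
  rcases Nat.lt_or_ge j (k + 1) with h | h
  · have e : k + 1 - j = (k - j) + 1 := by omega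
    rw [e, Nat.choose_succ_succ]
    push_cast; ring
  · have e1 : j = k + 1 := by omega
    subst e1
    have e2 : k + 1 - (k + 1) = 0 := by omega
    have e3 : k - (k + 1) = 0 := by omega
    rw [e2, e3]
    norm_num [Nat.choose_eq_zero_of_lt]

lemma LL_rec (M : ℕ) (l : ℤ) (k n : ℕ) :
    LL M l (k + 2) n = LL M l (k + 1) (n + 1) - LL M l k n := by
  set G : ℕ → ℝ := fun j =>
    (-1 : ℝ) ^ (j + 1) * (((k - j).choose (j + 1) : ℕ) : ℝ) * A 2 M l (-1) (n + k - 2 * j)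
    with hG
  set H : ℕ → ℝ := fun j =>
    (-1 : ℝ) ^ j * (((k - j).choose j : ℕ) : ℝ) * A 2 M l (-1) (n + k - 2 * j) with hH
  have claim1 : LL M l (k + 2) n
      = (∑ j ∈ Finset.range (k + 2), (G j - H j)) + A 2 M l (-1) (n + (k + 2)) := by
    unfold LL
    rw [Finset.sum_range_succ']
    congr 1
    · apply Finset.sum_congr rfl
      intro j hj
      rw [Finset.mem_range] at hj
      have e1 : k + 2 - (j + 1) = k + 1 - j := by omega
      have e2 : n + (k + 2) - 2 * (j + 1) = n + k - 2 * j := by omega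
      rw [e1, e2, pas k j (by omega), hG, hH]
      simp only []
      rw [pow_succ]
      ring
    · have e : n + (k + 2) - 2 * 0 = n + (k + 2) := by omega
      rw [e]
      simp
  have claim2 : LL M l (k + 1) (n + 1)
      = (∑ j ∈ Finset.range (k + 1), G j) + A 2 M l (-1) (n + (k + 2)) := by
    unfold LL
    rw [Finset.sum_range_succ']
    congr 1
    · apply Finset.sum_congr rfl
      intro j hj
      rw [Finset.mem_range] at hj
      have e1 : k + 1 - (j + 1) = k - j := by omega
      have e2 : n + 1 + (k + 1) - 2 * (j + 1) = n + k - 2 * j := by omega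
      rw [e1, e2, hG]
    · have e : n + 1 + (k + 1) - 2 * 0 = n + (k + 2) := by omega
      rw [e]
      simp
  have claim3 : (∑ j ∈ Finset.range (k + 2), G j) = ∑ j ∈ Finset.range (k + 1), G j := by
    rw [Finset.sum_range_succ]
    have e : k - (k + 1) = 0 := by omega
    rw [hG]
    simp only []
    rw [e, Nat.choose_eq_zero_of_lt (by omega)]
    norm_num
  have claim4 : (∑ j ∈ Finset.range (k + 2), H j) = LL M l k n := by
    rw [Finset.sum_range_succ]
    have e : k - (k + 1) = 0 := by omega
    have hz : H (k + 1) = 0 := by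
      rw [hH]
      simp only []
      rw [e, Nat.choose_eq_zero_of_lt (by omega)]
      norm_num
    rw [hz, add_zero]
    rfl
  rw [claim1, claim2, Finset.sum_sub_distrib, claim3, claim4]
  ring

lemma LL_eq_RR (M : ℕ) (hM : 1 ≤ M) : ∀ k n (l : ℤ), LL M l k n = RR M l k n := by
  intro k
  induction k using Nat.strong_induction_on with
  | _ k ih =>
    match k with
    | 0 =>
      intro n l
      unfold LL RR
      simp
    | 1 =>
      intro n l
      unfold LL RR
      simp only [Finset.sum_range_succ, Finset.sum_range_zero]
      have e0 : n + 1 - 2 * 0 = n + 1 := by omega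
      have e2 : l + ((1 : ℕ) : ℤ) - 2 * ((0 : ℕ) : ℤ) = l + 1 := by push_cast; ring
      have e3 : l + ((1 : ℕ) : ℤ) - 2 * ((1 : ℕ) : ℤ) = l - 1 := by push_cast; ring
      rw [e0, e2, e3, A_pascal M hM l n]
      norm_num
    | (k + 2) =>
      intro n l
      rw [LL_rec, RR_rec M hM, ih (k + 1) (by omega), ih k (by omega)]

lemma even_odd_split (g : ℕ → ℝ) (m : ℕ) :
    ∑ t ∈ Finset.range (2 * m + 1), g t
      = (∑ i ∈ Finset.range (m + 1), g (2 * i)) + ∑ i ∈ Finset.range m, g (2 * i + 1) := by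
  induction m with
  | zero => simp
  | succ m ih =>
    have e : 2 * (m + 1) + 1 = (2 * m + 1) + 1 + 1 := by ring
    rw [e, Finset.sum_range_succ, Finset.sum_range_succ, ih,
      Finset.sum_range_succ (fun i => g (2 * i)) (m + 1),
      Finset.sum_range_succ (fun i => g (2 * i + 1)) m,
      show 2 * m + 1 + 1 = 2 * (m + 1) from by ring]
    ring

noncomputable def S (m n : ℕ) (c : ℤ) : ℝ :=
  ∑ t ∈ Finset.range (2 * m + 1), (-1 : ℝ) ^ t * A 2 (2 * m + 1) (c - t) (-1) n

lemma S_step (m n : ℕ) (c : ℤ) : S m n (c + 1) = - S m n c := by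
  unfold S
  rw [Finset.sum_range_succ'
      (fun t : ℕ => (-1 : ℝ) ^ t * A 2 (2 * m + 1) (c + 1 - t) (-1) n) (2 * m),
    Finset.sum_range_succ
      (fun t : ℕ => (-1 : ℝ) ^ t * A 2 (2 * m + 1) (c - t) (-1) n) (2 * m)]
  have key : ∀ t ∈ Finset.range (2 * m),
      (-1 : ℝ) ^ (t + 1) * A 2 (2 * m + 1) (c + 1 - ((t + 1 : ℕ) : ℤ)) (-1) n
        = -((-1 : ℝ) ^ t * A 2 (2 * m + 1) (c - (t : ℤ)) (-1) n) := by
    intro t _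
    have e : c + 1 - ((t + 1 : ℕ) : ℤ) = c - (t : ℤ) := by push_cast; ring
    rw [e, pow_succ]
    ring
  rw [Finset.sum_congr rfl key, Finset.sum_neg_distrib]
  have hA : A 2 (2 * m + 1) (c + 1 - ((0 : ℕ) : ℤ)) (-1) n
      = - A 2 (2 * m + 1) (c - ((2 * m : ℕ) : ℤ)) (-1) n := by
    have e : c + 1 - ((0 : ℕ) : ℤ) = (c - ((2 * m : ℕ) : ℤ)) + ((2 * m + 1 : ℕ) : ℤ) := by
      push_cast; ring
    rw [e, A_anti]
  rw [hA]
  have hpow : (-1 : ℝ) ^ (2 * m) = 1 := Even.neg_one_pow ⟨m, by ring⟩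
  rw [hpow]
  ring

lemma S_per2 (m n : ℕ) (c : ℤ) : S m n (c + 2) = S m n c := by
  rw [show c + 2 = c + 1 + 1 from by ring, S_step, S_step, neg_neg]

lemma S_shift (m n : ℕ) (c : ℤ) : ∀ k : ℕ, S m n (c + 2 * k) = S m n c := by
  intro k
  induction k with
  | zero => norm_num
  | succ k ih =>
    rw [show c + 2 * ((k + 1 : ℕ) : ℤ) = (c + 2 * (k : ℤ)) + 2 from by push_cast; ring,
      S_per2, ih]

lemma npow_parity (a b : ℕ) (h : a % 2 = b % 2) : (-1 : ℝ) ^ a = (-1 : ℝ) ^ b := by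
  rcases Nat.even_or_odd a with ha | ha
  · rw [Even.neg_one_pow ha, Even.neg_one_pow (by rcases ha with ⟨x, hx⟩; exact ⟨b / 2, by omega⟩)]
  · rw [Odd.neg_one_pow ha, Odd.neg_one_pow (by rcases ha with ⟨x, hx⟩; exact ⟨b / 2, by omega⟩)]

lemma S_reflect (m n : ℕ) (c : ℤ) : S m n c = - S m n (-c) := by
  unfold S
  rw [← Finset.sum_range_reflect
    (fun t : ℕ => (-1 : ℝ) ^ t * A 2 (2 * m + 1) (c - t) (-1) n) (2 * m + 1)]
  have key : ∀ t ∈ Finset.range (2 * m + 1),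
      (-1 : ℝ) ^ (2 * m + 1 - 1 - t) * A 2 (2 * m + 1) (c - ((2 * m + 1 - 1 - t : ℕ) : ℤ)) (-1) n
        = -((-1 : ℝ) ^ t * A 2 (2 * m + 1) (-c - (t : ℤ)) (-1) n) := by
    intro t ht
    rw [Finset.mem_range] at ht
    have hp : (-1 : ℝ) ^ (2 * m + 1 - 1 - t) = (-1 : ℝ) ^ t := npow_parity _ _ (by omega)
    have e1 : c - ((2 * m + 1 - 1 - t : ℕ) : ℤ) = c - 2 * (m : ℤ) + t := by omega
    have hv : A 2 (2 * m + 1) (c - 2 * (m : ℤ) + t) (-1) n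
        = - A 2 (2 * m + 1) (-c - (t : ℤ)) (-1) n := by
      rw [A_symm]
      have e2 : 1 - (c - 2 * (m : ℤ) + t) = (-c - (t : ℤ)) + ((2 * m + 1 : ℕ) : ℤ) := by
        push_cast; ring
      rw [e2, A_anti]
    rw [hp, e1, hv]
    ring
  rw [Finset.sum_congr rfl key, Finset.sum_neg_distrib]

lemma S_zero (m n : ℕ) (c : ℤ) : S m n c = 0 := by
  have h1 := S_reflect m n c
  have h2 : S m n (-c) = S m n c := by
    rcases le_or_gt 0 c with hc | hc
    · have h3 := S_shift m n (-c) c.toNat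
      rw [show -c + 2 * ((c.toNat : ℕ) : ℤ) = c from by omega] at h3
      exact h3.symm
    · have h3 := S_shift m n c (-c).toNat
      rw [show c + 2 * (((-c).toNat : ℕ) : ℤ) = -c from by omega] at h3
      exact h3
  rw [h2] at h1
  linarith

theorem stmt13 (m : ℕ) (hm : 1 ≤ m) (l : ℤ) (n : ℕ) :
    ∑ j ∈ Finset.range (m / 2 + 1), (-1 : ℝ) ^ j * ((m - j).choose j : ℝ) *
        A 2 (2 * m + 1) l (-1) (n + m - 2 * j)
      = ∑ j ∈ Finset.range ((m - 1) / 2 + 1), (-1 : ℝ) ^ j * ((m - 1 - j).choose j : ℝ) *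
          A 2 (2 * m + 1) l (-1) (n + m - 1 - 2 * j) := by
  have hM : 1 ≤ 2 * m + 1 := by omega
  -- Step A : theorem LHS = LL (2m+1) l m n
  have stepA : LL (2 * m + 1) l m n
      = ∑ j ∈ Finset.range (m / 2 + 1), (-1 : ℝ) ^ j * ((m - j).choose j : ℝ) *
          A 2 (2 * m + 1) l (-1) (n + m - 2 * j) := by
    unfold LL
    refine (Finset.sum_subset (fun j hj => ?_) (fun j hj hnj => ?_)).symm
    · rw [Finset.mem_range] at hj ⊢; omega
    · rw [Finset.mem_range] at hj hnj
      rw [Nat.choose_eq_zero_of_lt (show m - j < j by omega)]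
      norm_num
  -- Step B : theorem RHS = LL (2m+1) l (m-1) n
  have stepB : LL (2 * m + 1) l (m - 1) n
      = ∑ j ∈ Finset.range ((m - 1) / 2 + 1), (-1 : ℝ) ^ j * ((m - 1 - j).choose j : ℝ) *
          A 2 (2 * m + 1) l (-1) (n + m - 1 - 2 * j) := by
    unfold LL
    have e : ∀ j : ℕ, n + m - 1 - 2 * j = n + (m - 1) - 2 * j := fun j => by omega
    calc (∑ j ∈ Finset.range ((m - 1) + 1), (-1 : ℝ) ^ j * (((m - 1) - j).choose j : ℝ) *
            A 2 (2 * m + 1) l (-1) (n + (m - 1) - 2 * j))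
        = ∑ j ∈ Finset.range ((m - 1) / 2 + 1), (-1 : ℝ) ^ j * (((m - 1) - j).choose j : ℝ) *
            A 2 (2 * m + 1) l (-1) (n + (m - 1) - 2 * j) := by
          refine (Finset.sum_subset (fun j hj => ?_) (fun j hj hnj => ?_)).symm
          · rw [Finset.mem_range] at hj ⊢; omega
          · rw [Finset.mem_range] at hj hnj
            rw [Nat.choose_eq_zero_of_lt (show m - 1 - j < j by omega)]
            norm_num
      _ = _ := by
          apply Finset.sum_congr rfl
          intro j _
          rw [e j]
  -- Step D : RR m = RR (m-1)
  have stepD : RR (2 * m + 1) l m n = RR (2 * m + 1) l (m - 1) n := by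
    have hS := S_zero m n (l + (m : ℤ))
    unfold S at hS
    rw [even_odd_split (fun t : ℕ => (-1 : ℝ) ^ t * A 2 (2 * m + 1) (l + (m : ℤ) - t) (-1) n) m]
      at hS
    have hEven : (∑ i ∈ Finset.range (m + 1),
        (-1 : ℝ) ^ (2 * i) * A 2 (2 * m + 1) (l + (m : ℤ) - ((2 * i : ℕ) : ℤ)) (-1) n)
        = RR (2 * m + 1) l m n := by
      unfold RR
      apply Finset.sum_congr rfl
      intro i _
      rw [Even.neg_one_pow ⟨i, by ring⟩, one_mul,
        show l + (m : ℤ) - ((2 * i : ℕ) : ℤ) = l + (m : ℤ) - 2 * (i : ℤ) from by push_cast; ring]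
    have hOdd : (∑ i ∈ Finset.range m,
        (-1 : ℝ) ^ (2 * i + 1) * A 2 (2 * m + 1) (l + (m : ℤ) - ((2 * i + 1 : ℕ) : ℤ)) (-1) n)
        = - RR (2 * m + 1) l (m - 1) n := by
      unfold RR
      rw [show (m - 1) + 1 = m from by omega, ← Finset.sum_neg_distrib]
      apply Finset.sum_congr rfl
      intro i _
      rw [Odd.neg_one_pow ⟨i, by ring⟩,
        show l + (m : ℤ) - ((2 * i + 1 : ℕ) : ℤ) = l + ((m - 1 : ℕ) : ℤ) - 2 * (i : ℤ) from
          by omega]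
      ring
    rw [hEven, hOdd] at hS
    linarith
  rw [← stepA, ← stepB, LL_eq_RR _ hM, LL_eq_RR _ hM, stepD]
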